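/- Let p be an odd prime. Then for any γ ∈ SL_2(Z), the lattice S is contained in γ^{-1} S(1/p) γ, which in turn is contained in p^{-1} S. -/

import Mathlib

/-- The lattice `R(C/B) ⊆ M₂(ℚ)`. -/
def Rlat (C B : ℕ) : Set (Matrix (Fin 2) (Fin 2) ℚ) :=
  {x | (∃ n : ℤ, x 0 0 = n) ∧ (∃ n : ℤ, x 1 1 = n) ∧
       (∃ n : ℤ, x 0 1 = (n : ℚ) / B) ∧ (∃ n : ℤ, x 1 0 = (C : ℚ) * n)}

/-- `S = ℤ + 2 M₂(ℤ)`, viewed inside `M₂(ℚ)`. -/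
def Sset : Set (Matrix (Fin 2) (Fin 2) ℚ) :=
  {α | ∃ (m : ℤ) (γ : Matrix (Fin 2) (Fin 2) ℤ),
    α = (m : ℚ) • (1 : Matrix (Fin 2) (Fin 2) ℚ) + (2 : ℚ) • γ.map (Int.cast : ℤ → ℚ)}

/-- `S(1/p) = ℤ + 2 R(1/p) ⊆ M₂(ℚ)`. -/
def SOneOverP (p : ℕ) : Set (Matrix (Fin 2) (Fin 2) ℚ) :=
  {α | ∃ (m : ℤ) (β : Matrix (Fin 2) (Fin 2) ℚ), β ∈ Rlat 1 p ∧
    α = (m : ℚ) • (1 : Matrix (Fin 2) (Fin 2) ℚ) + (2 : ℚ) • β}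

/-
`S` is stable under conjugation by `SL₂(ℤ)`, it lies in `S(1/p)` because `M₂(ℤ) ⊆ R(1/p)`,
and `p • S(1/p) ⊆ S` because `p • R(1/p) ⊆ M₂(ℤ)`. Conjugating these two inclusions by `γ`
gives the claim.
-/

section IntCastMap

variable {n : Type*} [Fintype n] {R : Type*} [Ring R]

lemma map_intCast_mul (A B : Matrix n n ℤ) :
    (A * B).map (Int.cast : ℤ → R) = A.map Int.cast * B.map Int.cast :=
  Matrix.map_mul (f := Int.castRingHom R)

lemma map_intCast_mul_map_intCast_eq_one [DecidableEq n] {A B : Matrix n n ℤ} (h : A * B = 1) :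
    A.map (Int.cast : ℤ → R) * B.map Int.cast = 1 := by
  rw [← map_intCast_mul, h, Matrix.map_one _ Int.cast_zero Int.cast_one]

end IntCastMap

lemma map_intCast_mem_Rlat_one {B : ℕ} (hB : B ≠ 0) (c : Matrix (Fin 2) (Fin 2) ℤ) :
    c.map (Int.cast : ℤ → ℚ) ∈ Rlat 1 B :=
  ⟨⟨c 0 0, rfl⟩, ⟨c 1 1, rfl⟩, ⟨B * c 0 1, by simp [hB]⟩, ⟨c 1 0, by simp⟩⟩

lemma exists_map_intCast_eq_smul_of_mem_Rlat {C B : ℕ} (hB : B ≠ 0)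
    {x : Matrix (Fin 2) (Fin 2) ℚ} (hx : x ∈ Rlat C B) :
    ∃ c : Matrix (Fin 2) (Fin 2) ℤ, c.map (Int.cast : ℤ → ℚ) = (B : ℚ) • x := by
  obtain ⟨⟨n₀₀, h₀₀⟩, ⟨n₁₁, h₁₁⟩, ⟨n₀₁, h₀₁⟩, ⟨n₁₀, h₁₀⟩⟩ := hx
  refine ⟨!![B * n₀₀, n₀₁; B * C * n₁₀, B * n₁₁], ?_⟩
  ext i j
  have hB' : (B : ℚ) ≠ 0 := Nat.cast_ne_zero.mpr hB
  fin_cases i <;> fin_cases j <;> simp [h₀₀, h₀₁, h₁₀, h₁₁, mul_assoc, mul_div_cancel₀ _ hB']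

lemma Sset_subset_SOneOverP {p : ℕ} (hp : p ≠ 0) : Sset ⊆ SOneOverP p := by
  rintro _ ⟨m, c, rfl⟩
  exact ⟨m, c.map Int.cast, map_intCast_mem_Rlat_one hp c, rfl⟩

lemma natCast_smul_mem_Sset_of_mem_SOneOverP {p : ℕ} (hp : p ≠ 0)
    {s : Matrix (Fin 2) (Fin 2) ℚ} (hs : s ∈ SOneOverP p) : (p : ℚ) • s ∈ Sset := by
  obtain ⟨m, β, hβ, rfl⟩ := hs
  obtain ⟨c, hc⟩ := exists_map_intCast_eq_smul_of_mem_Rlat hp hβ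
  refine ⟨p * m, c, ?_⟩
  rw [hc, smul_add, smul_smul, smul_comm (p : ℚ) (2 : ℚ) β]
  push_cast
  rfl

lemma mul_mul_mem_Sset_of_mul_eq_one {A B : Matrix (Fin 2) (Fin 2) ℤ} (hAB : A * B = 1)
    {s : Matrix (Fin 2) (Fin 2) ℚ} (hs : s ∈ Sset) :
    A.map (Int.cast : ℤ → ℚ) * s * B.map Int.cast ∈ Sset := by
  obtain ⟨m, c, rfl⟩ := hs
  refine ⟨m, A * c * B, ?_⟩
  rw [mul_add, add_mul, Matrix.mul_smul, Matrix.smul_mul, Matrix.mul_smul, Matrix.smul_mul,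
    mul_one, map_intCast_mul_map_intCast_eq_one hAB, map_intCast_mul, map_intCast_mul]

theorem S_subset_conj_subset_pinv_S_general (p : ℕ) (hp : p.Prime)
    (γ : Matrix.SpecialLinearGroup (Fin 2) ℤ) :
    Sset ⊆ {α : Matrix (Fin 2) (Fin 2) ℚ | ∃ s ∈ SOneOverP p,
        α = ((γ⁻¹ : Matrix.SpecialLinearGroup (Fin 2) ℤ) :
              Matrix (Fin 2) (Fin 2) ℤ).map (Int.cast : ℤ → ℚ) * s *
            ((γ : Matrix (Fin 2) (Fin 2) ℤ).map (Int.cast : ℤ → ℚ))} ∧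
    {α : Matrix (Fin 2) (Fin 2) ℚ | ∃ s ∈ SOneOverP p,
        α = ((γ⁻¹ : Matrix.SpecialLinearGroup (Fin 2) ℤ) :
              Matrix (Fin 2) (Fin 2) ℤ).map (Int.cast : ℤ → ℚ) * s *
            ((γ : Matrix (Fin 2) (Fin 2) ℤ).map (Int.cast : ℤ → ℚ))} ⊆
      {α : Matrix (Fin 2) (Fin 2) ℚ | ∃ s ∈ Sset, α = ((p : ℚ))⁻¹ • s} := by
  have hinv_mul : ((γ⁻¹ * γ : Matrix.SpecialLinearGroup (Fin 2) ℤ) : Matrix (Fin 2) (Fin 2) ℤ) = 1 :=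
    congrArg Subtype.val (inv_mul_cancel γ)
  have hmul_inv : ((γ * γ⁻¹ : Matrix.SpecialLinearGroup (Fin 2) ℤ) : Matrix (Fin 2) (Fin 2) ℤ) = 1 :=
    congrArg Subtype.val (mul_inv_cancel γ)
  have hcancel := map_intCast_mul_map_intCast_eq_one (R := ℚ) hinv_mul
  refine ⟨fun α hα => ⟨_, Sset_subset_SOneOverP hp.ne_zero
    (mul_mul_mem_Sset_of_mul_eq_one hmul_inv hα), ?_⟩, ?_⟩
  · rw [← mul_assoc, ← mul_assoc, hcancel, one_mul, mul_assoc, hcancel, mul_one]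
  · rintro _ ⟨s, hs, rfl⟩
    have hp0 : (p : ℚ) ≠ 0 := by exact_mod_cast hp.ne_zero
    refine ⟨_, mul_mul_mem_Sset_of_mul_eq_one hinv_mul
      (natCast_smul_mem_Sset_of_mem_SOneOverP hp.ne_zero hs), ?_⟩
    rw [Matrix.mul_smul, Matrix.smul_mul, smul_smul, inv_mul_cancel₀ hp0, one_smul]

/-- For `p` an odd prime and `γ ∈ SL₂(ℤ)`, one has `S ⊆ γ⁻¹ S(1/p) γ ⊆ p⁻¹ S`. -/
theorem S_subset_conj_subset_pinv_S (p : ℕ) (hp : p.Prime) (hp2 : p ≠ 2)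
    (γ : Matrix.SpecialLinearGroup (Fin 2) ℤ) :
    Sset ⊆ {α : Matrix (Fin 2) (Fin 2) ℚ | ∃ s ∈ SOneOverP p,
        α = ((γ⁻¹ : Matrix.SpecialLinearGroup (Fin 2) ℤ) :
              Matrix (Fin 2) (Fin 2) ℤ).map (Int.cast : ℤ → ℚ) * s *
            ((γ : Matrix (Fin 2) (Fin 2) ℤ).map (Int.cast : ℤ → ℚ))} ∧
    {α : Matrix (Fin 2) (Fin 2) ℚ | ∃ s ∈ SOneOverP p,
        α = ((γ⁻¹ : Matrix.SpecialLinearGroup (Fin 2) ℤ) :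
              Matrix (Fin 2) (Fin 2) ℤ).map (Int.cast : ℤ → ℚ) * s *
            ((γ : Matrix (Fin 2) (Fin 2) ℤ).map (Int.cast : ℤ → ℚ))} ⊆
      {α : Matrix (Fin 2) (Fin 2) ℚ | ∃ s ∈ Sset, α = ((p : ℚ))⁻¹ • s} :=
  S_subset_conj_subset_pinv_S_general p hp γ
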